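/- arXiv:2505.00436 — 9 statements merged into one kernel-verified Lean document; each statement's English description precedes it below -/
import Mathlib

section
/- Let g be a Lie algebra over a field and let α : g → g be a linear map that is anti-commuting, i.e. ⁅α(x), y⁆ = ⁅α(y), x⁆ for all x, y ∈ g. Then the bilinear map δ defined by δ(x, y) = ⁅α(x), y⁆ is a symmetric biderivation of g; that is, δ(x,y) = δ(y,x) for all x, y, and δ satisfies δ(⁅x,y⁆, z) = ⁅x, δ(y,z)⁆ + ⁅δ(x,z), y⁆ and δ(x, ⁅y,z⁆) = ⁅y, δ(x,z)⁆ + ⁅δ(x,y), z⁆ for all x, y, z ∈ g. -/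
/-- If `α` is an anti-commuting linear map on a Lie algebra `g`,
then `δ(x,y) = ⁅α x, y⁆` is a symmetric biderivation of `g`. -/
theorem stmt_0 {K : Type*} [Field K] {g : Type*} [LieRing g] [LieAlgebra K g]
    (α : g →ₗ[K] g) (hα : ∀ x y : g, ⁅α x, y⁆ = ⁅α y, x⁆) :
    (∀ x y : g, ⁅α x, y⁆ = ⁅α y, x⁆) ∧
    (∀ x y z : g, ⁅α ⁅x, y⁆, z⁆ = ⁅x, ⁅α y, z⁆⁆ + ⁅⁅α x, z⁆, y⁆) ∧
    (∀ x y z : g, ⁅α x, ⁅y, z⁆⁆ = ⁅y, ⁅α x, z⁆⁆ + ⁅⁅α x, y⁆, z⁆) := by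
  refine ⟨hα, fun x y z => ?_, fun x y z => ?_⟩
  · rw [hα, leibniz_lie, hα z x, hα z y]; abel
  · rw [lie_lie]; abel
end

section
/- Let g be a Lie algebra over a field with trivial center such that every derivation of g is inner (i.e. for every linear map D : g → g satisfying D⁅x,y⁆ = ⁅D x, y⁆ + ⁅x, D y⁆ there exists a ∈ g with D = ad a). If δ : g × g → g is a skew-symmetric biderivation of g, then there exists a linear map α : g → g which is commuting, i.e. ⁅α(x), y⁆ = ⁅x, α(y)⁆ for all x, y ∈ g, such that δ(x, y) = ⁅α(x), y⁆ for all x, y ∈ g. -/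
/-- In a centerless Lie algebra all of whose derivations are inner,
every skew-symmetric biderivation `δ` is of the form `δ(x,y) = ⁅α x, y⁆` for some
commuting linear map `α`. -/
theorem stmt_1 {K : Type*} [Field K] {g : Type*} [LieRing g] [LieAlgebra K g]
    (hcenter : ∀ x : g, (∀ y : g, ⁅x, y⁆ = 0) → x = 0)
    (hinner : ∀ D : g →ₗ[K] g,
      (∀ x y : g, D ⁅x, y⁆ = ⁅D x, y⁆ + ⁅x, D y⁆) → ∃ a : g, ∀ x : g, D x = ⁅a, x⁆)
    (δ : g →ₗ[K] g →ₗ[K] g)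
    (hbd1 : ∀ x y z : g, δ ⁅x, y⁆ z = ⁅x, δ y z⁆ + ⁅δ x z, y⁆)
    (hbd2 : ∀ x y z : g, δ x ⁅y, z⁆ = ⁅y, δ x z⁆ + ⁅δ x y, z⁆)
    (hskew : ∀ x y : g, δ x y = -δ y x) :
    ∃ α : g →ₗ[K] g, (∀ x y : g, ⁅α x, y⁆ = ⁅x, α y⁆) ∧ ∀ x y : g, δ x y = ⁅α x, y⁆ := by
  have key : ∀ x : g, ∃ a : g, ∀ y : g, δ x y = ⁅a, y⁆ := fun x =>
    hinner (δ x) (fun y z => by rw [hbd2]; exact add_comm _ _)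
  have huniq : ∀ a b : g, (∀ y : g, ⁅a, y⁆ = ⁅b, y⁆) → a = b := by
    intro a b h
    exact sub_eq_zero.mp (hcenter (a - b) (fun y => by rw [sub_lie, h, sub_self]))
  set f : g → g := fun x => Classical.choose (key x) with hfdef
  have hf : ∀ x y : g, δ x y = ⁅f x, y⁆ := fun x => Classical.choose_spec (key x)
  refine ⟨{ toFun := f, map_add' := ?_, map_smul' := ?_ }, ?_, ?_⟩
  · intro x x'
    apply huniq
    intro y
    rw [add_lie, ← hf, ← hf, ← hf, map_add, LinearMap.add_apply]
  · intro c x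
    apply huniq
    intro y
    rw [smul_lie, ← hf, ← hf, map_smul, LinearMap.smul_apply, RingHom.id_apply]
  · intro x y
    simp only [LinearMap.coe_mk, AddHom.coe_mk]
    rw [← hf, hskew, hf]; exact lie_skew _ _
  · intro x y
    simp only [LinearMap.coe_mk, AddHom.coe_mk]
    exact hf x y
end

section
/- Let g be a Lie algebra over a field with trivial center such that every derivation of g is inner. If δ : g × g → g is a symmetric biderivation of g, then there exists a linear map α : g → g which is anti-commuting, i.e. ⁅α(x), y⁆ = ⁅α(y), x⁆ for all x, y ∈ g, such that δ(x, y) = ⁅α(x), y⁆ for all x, y ∈ g. -/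
/-- In a centerless Lie algebra all of whose derivations are inner,
every symmetric biderivation `δ` is of the form `δ(x,y) = ⁅α x, y⁆` for some anti-
commuting linear map `α`. -/
theorem stmt_2 {K : Type*} [Field K] {g : Type*} [LieRing g] [LieAlgebra K g]
    (hcenter : ∀ x : g, (∀ y : g, ⁅x, y⁆ = 0) → x = 0)
    (hinner : ∀ D : g →ₗ[K] g,
      (∀ x y : g, D ⁅x, y⁆ = ⁅D x, y⁆ + ⁅x, D y⁆) → ∃ a : g, ∀ x : g, D x = ⁅a, x⁆)
    (δ : g →ₗ[K] g →ₗ[K] g)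
    (hbd1 : ∀ x y z : g, δ ⁅x, y⁆ z = ⁅x, δ y z⁆ + ⁅δ x z, y⁆)
    (hbd2 : ∀ x y z : g, δ x ⁅y, z⁆ = ⁅y, δ x z⁆ + ⁅δ x y, z⁆)
    (hsymm : ∀ x y : g, δ x y = δ y x) :
    ∃ α : g →ₗ[K] g, (∀ x y : g, ⁅α x, y⁆ = ⁅α y, x⁆) ∧ ∀ x y : g, δ x y = ⁅α x, y⁆ := by
  have hder : ∀ x : g, ∃ a : g, ∀ y : g, δ x y = ⁅a, y⁆ := fun x => by
    apply hinner (δ x)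
    intro y z
    rw [hbd2 x y z]; abel
  choose f hf using hder
  have huniq : ∀ a b : g, (∀ y : g, ⁅a, y⁆ = ⁅b, y⁆) → a = b := by
    intro a b h
    have : a - b = 0 := hcenter _ (fun y => by rw [sub_lie, h y, sub_self])
    exact sub_eq_zero.mp this
  refine ⟨{ toFun := f
            map_add' := ?_
            map_smul' := ?_ }, ?_, ?_⟩
  · intro x x'
    apply huniq
    intro y
    rw [← hf (x + x') y, add_lie, ← hf x y, ← hf x' y, map_add, LinearMap.add_apply]
  · intro c x
    apply huniq
    intro y
    rw [← hf (c • x) y, RingHom.id_apply, smul_lie, ← hf x y, map_smul, LinearMap.smul_apply]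
  · intro x y
    simp only [LinearMap.coe_mk, AddHom.coe_mk]
    rw [← hf x y, ← hf y x, hsymm]
  · intro x y
    exact hf x y
end

section
/- Let K be a field of characteristic different from 2 and let g be a finite-dimensional Lie algebra over K whose Killing form is nondegenerate. Then every anti-commuting linear map on g is zero; that is, if α : g → g is linear and ⁅α(x), y⁆ = ⁅α(y), x⁆ for all x, y ∈ g, then α = 0. -/
/-!
Let `B` be the Killing form and `T x y z = B (α x) ⁅y, z⁆`. Invariance of `B` turns the
anti-commuting condition into the symmetry of `T` in its first two arguments, while `T` is
antisymmetric in its last two. Composing these transpositions around the six orderings of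
`x, y, z` gives `T = -T`, so `T = 0` when `2 ≠ 0`. Nondegeneracy of `B` then
makes every `α x` central, and a central element lies in the kernel of the Killing form, hence is zero.
-/

theorem eq_zero_of_swap_eq_of_swap_eq_neg {X R : Type*} [Ring R] [NoZeroDivisors R]
    (h2 : (2 : R) ≠ 0) {T : X → X → X → R} (hsymm : ∀ x y z, T x y z = T y x z)
    (hanti : ∀ x y z, T x y z = -T x z y) (x y z : X) : T x y z = 0 := by
  have hneg : T x y z = -T x y z :=
    calc T x y z = -T y z x := by rw [hsymm, hanti]
      _ = T z x y := by rw [hsymm y z x, hanti z y x, neg_neg]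
      _ = -T x y z := by rw [hsymm, hanti]
  have htwo : 2 * T x y z = 0 := by
    rw [two_mul]
    exact eq_neg_iff_add_eq_zero.mp hneg
  exact (mul_eq_zero.mp htwo).resolve_left h2

namespace LieAlgebra

variable {R L : Type*} [CommRing R] [LieRing L] [LieAlgebra R L]

theorem killingForm_eq_zero_of_forall_lie_eq_zero {x : L} (hx : ∀ y : L, ⁅x, y⁆ = 0) (z : L) :
    killingForm R L x z = 0 := by
  have had : ad R L x = 0 := LinearMap.ext hx
  rw [killingForm_apply_apply, had, LinearMap.zero_comp, map_zero]

theorem killingForm_lie_eq_zero_of_anticomm [NoZeroDivisors R] (h2 : (2 : R) ≠ 0)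
    {α : L →ₗ[R] L} (hα : ∀ x y : L, ⁅α x, y⁆ = ⁅α y, x⁆) (x y z : L) :
    killingForm R L (α x) ⁅y, z⁆ = 0 := by
  refine eq_zero_of_swap_eq_of_swap_eq_neg h2 (T := fun x y z ↦ killingForm R L (α x) ⁅y, z⁆)
    (fun x y z ↦ ?_) (fun x y z ↦ ?_) x y z
  · rw [← LieModule.traceForm_apply_lie_apply, hα, LieModule.traceForm_apply_lie_apply]
  · rw [← lie_skew z y, map_neg, neg_neg]

theorem lie_eq_zero_of_anticomm [NoZeroDivisors R] (h2 : (2 : R) ≠ 0)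
    (hB : (killingForm R L).SeparatingLeft) {α : L →ₗ[R] L}
    (hα : ∀ x y : L, ⁅α x, y⁆ = ⁅α y, x⁆) (x y : L) : ⁅α x, y⁆ = 0 :=
  hB _ fun z ↦ by
    rw [LieModule.traceForm_apply_lie_apply]
    exact killingForm_lie_eq_zero_of_anticomm h2 hα x y z

end LieAlgebra

theorem stmt_3_general {K : Type*} [Field K] (hchar : ringChar K ≠ 2)
    {g : Type*} [LieRing g] [LieAlgebra K g]
    (hKilling : (killingForm K g).Nondegenerate)
    (α : g →ₗ[K] g) (hα : ∀ x y : g, ⁅α x, y⁆ = ⁅α y, x⁆) :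
    α = 0 := by
  have hcentral := LieAlgebra.lie_eq_zero_of_anticomm (Ring.two_ne_zero hchar) hKilling.1 hα
  ext x
  exact hKilling.1 _ (LieAlgebra.killingForm_eq_zero_of_forall_lie_eq_zero (hcentral x))

/-- Over a field of characteristic ≠ 2, a finite-dimensional Lie algebra
with nondegenerate Killing form admits no nonzero anti-commuting linear map. -/
theorem stmt_3 {K : Type*} [Field K] (hchar : ringChar K ≠ 2)
    {g : Type*} [LieRing g] [LieAlgebra K g] [Module.Finite K g]
    (hKilling : (killingForm K g).Nondegenerate)
    (α : g →ₗ[K] g) (hα : ∀ x y : g, ⁅α x, y⁆ = ⁅α y, x⁆) :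
    α = 0 :=
  stmt_3_general hchar hKilling α hα
end

section
/- Let g be a finite-dimensional Lie algebra over ℂ whose Killing form is nondegenerate (equivalently, g is semisimple). Then every symmetric biderivation of g is the zero map: if δ : g × g → g is bilinear, satisfies δ(⁅x,y⁆, z) = ⁅x, δ(y,z)⁆ + ⁅δ(x,z), y⁆ and δ(x, ⁅y,z⁆) = ⁅y, δ(x,z)⁆ + ⁅δ(x,y), z⁆ for all x, y, z, and δ(x,y) = δ(y,x) for all x, y, then δ = 0. -/
/-!
For fixed `z`, the map `x ↦ δ x z` is a derivation, and the Killing form `B` is invariant under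
derivations. Hence `T x y z := B (δ x z) y` is antisymmetric in `x, y` and, by the symmetry of `δ`,
symmetric in `x, z`. Applying the two symmetries alternately, three times each, returns to
`T x y z` after three sign changes, so `T = -T`, i.e. `T = 0`; nondegeneracy of `B` then gives
`δ = 0`.
-/

theorem eq_zero_of_antisymm₁₂_of_symm₁₃ {α M : Type*} [AddCommGroup M] [IsAddTorsionFree M]
    {T : α → α → α → M} (h₁₂ : ∀ x y z, T y x z = -T x y z) (h₁₃ : ∀ x y z, T z y x = T x y z)
    (x y z : α) : T x y z = 0 := by
  refine neg_eq_self.mp ?_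
  calc -T x y z = T y x z := (h₁₂ x y z).symm
    _ = T z x y := h₁₃ z x y
    _ = -T x z y := h₁₂ x z y
    _ = -T y z x := by rw [h₁₃ y z x]
    _ = T z y x := (h₁₂ y z x).symm
    _ = T x y z := h₁₃ x y z

namespace LieDerivation

variable {R L : Type*} [CommRing R] [LieRing L] [LieAlgebra R L]

lemma ad_apply_eq_comp_sub_comp (D : LieDerivation R L L) (x : L) :
    LieAlgebra.ad R L (D x) = (D : L →ₗ[R] L) ∘ₗ LieAlgebra.ad R L x -
      LieAlgebra.ad R L x ∘ₗ (D : L →ₗ[R] L) := by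
  ext y
  simp

def ofLeibnizLeft (δ : L →ₗ[R] L →ₗ[R] L)
    (hδ : ∀ x y z, δ ⁅x, y⁆ z = ⁅x, δ y z⁆ + ⁅δ x z, y⁆) (z : L) : LieDerivation R L L where
  toLinearMap := δ.flip z
  leibniz' x y := by
    simp only [LinearMap.flip_apply, hδ, ← lie_skew (δ x z) y, sub_eq_add_neg]

variable [Module.Free R L] [Module.Finite R L]

lemma killingForm_apply_left (D : LieDerivation R L L) (x y : L) :
    killingForm R L (D x) y = -killingForm R L x (D y) := by
  rw [eq_neg_iff_add_eq_zero, killingForm_apply_apply, killingForm_apply_apply,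
    ad_apply_eq_comp_sub_comp, ad_apply_eq_comp_sub_comp]
  have := LinearMap.trace_comp_comm' (R := R) (D : L →ₗ[R] L)
    (LieAlgebra.ad R L x ∘ₗ LieAlgebra.ad R L y)
  simp only [LinearMap.sub_comp, LinearMap.comp_sub, map_sub, LinearMap.comp_assoc] at this ⊢
  linear_combination -this

end LieDerivation

theorem LieAlgebra.eq_zero_of_symmetric_biderivation {R L : Type*} [CommRing R]
    [IsAddTorsionFree R] [LieRing L] [LieAlgebra R L] [Module.Free R L] [Module.Finite R L]
    (hB : (killingForm R L).Nondegenerate) (δ : L →ₗ[R] L →ₗ[R] L)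
    (hδ : ∀ x y z, δ ⁅x, y⁆ z = ⁅x, δ y z⁆ + ⁅δ x z, y⁆) (hsymm : ∀ x y, δ x y = δ y x) :
    δ = 0 := by
  ext x z
  refine hB.1 _ fun y => eq_zero_of_antisymm₁₂_of_symm₁₃
    (T := fun x y z => killingForm R L (δ x z) y) (fun x y z => ?_) (fun x y z => ?_) x y z
  · exact (LieDerivation.killingForm_apply_left (LieDerivation.ofLeibnizLeft δ hδ z) y x).trans
      (congrArg Neg.neg (LieModule.traceForm_comm R L L y (δ x z)))
  · simp only [hsymm]

theorem stmt_4_general {g : Type*} [LieRing g] [LieAlgebra ℂ g] [Module.Finite ℂ g]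
    (hKilling : (killingForm ℂ g).Nondegenerate)
    (δ : g →ₗ[ℂ] g →ₗ[ℂ] g)
    (hbd1 : ∀ x y z : g, δ ⁅x, y⁆ z = ⁅x, δ y z⁆ + ⁅δ x z, y⁆)
    (hsymm : ∀ x y : g, δ x y = δ y x) :
    δ = 0 :=
  LieAlgebra.eq_zero_of_symmetric_biderivation hKilling δ hbd1 hsymm

/-- Every symmetric biderivation of a finite-dimensional complex Lie
algebra with nondegenerate Killing form is the zero map. -/
theorem stmt_4 {g : Type*} [LieRing g] [LieAlgebra ℂ g] [Module.Finite ℂ g]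
    (hKilling : (killingForm ℂ g).Nondegenerate)
    (δ : g →ₗ[ℂ] g →ₗ[ℂ] g)
    (hbd1 : ∀ x y z : g, δ ⁅x, y⁆ z = ⁅x, δ y z⁆ + ⁅δ x z, y⁆)
    (hbd2 : ∀ x y z : g, δ x ⁅y, z⁆ = ⁅y, δ x z⁆ + ⁅δ x y, z⁆)
    (hsymm : ∀ x y : g, δ x y = δ y x) :
    δ = 0 :=
  stmt_4_general hKilling δ hbd1 hsymm
end

section
/- Let g be a finite-dimensional semisimple Lie algebra over ℂ. Then every commuting linear map on g lies in the centroid of g: if f : g → g is linear and ⁅f(x), y⁆ = ⁅x, f(y)⁆ for all x, y ∈ g, then f(⁅x,y⁆) = ⁅f(x), y⁆ for all x, y ∈ g. -/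
/-!
The Killing form `κ` is nondegenerate by Cartan's criterion. A commuting map `f` satisfies
`ad (f x) = ad x ∘ f`, so `κ (f x) y - κ x (f y) = tr (ad (f ⁅y, x⁆))`; this vanishes because
`tr ∘ ad` kills brackets, hence is represented under `κ` by a central element, i.e. by `0`.
With `f` self-adjoint, invariance gives
`κ (f ⁅x, y⁆) z = κ ⁅x, y⁆ (f z) = κ x ⁅f y, z⁆ = κ ⁅f x, y⁆ z` for every `z`.
-/

open LieAlgebra LieModule LinearMap

section CommutingMap

variable {R L : Type*} [CommRing R] [LieRing L] [LieAlgebra R L]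

lemma ad_map_eq_ad_mul_of_commuting {f : L →ₗ[R] L} (hf : ∀ x y : L, ⁅f x, y⁆ = ⁅x, f y⁆)
    (x : L) : ad R L (f x) = ad R L x * f := by
  ext y
  simp [hf]

lemma map_lie_eq_lie_map_left_of_isSelfAdjoint {Φ : LinearMap.BilinForm R L}
    (hΦ : ∀ x y z : L, Φ ⁅x, y⁆ z = Φ x ⁅y, z⁆) (hsep : Φ.SeparatingLeft)
    {f : L →ₗ[R] L} (hadj : Φ.IsSelfAdjoint f) (hf : ∀ x y : L, ⁅f x, y⁆ = ⁅x, f y⁆)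
    (x y : L) : f ⁅x, y⁆ = ⁅f x, y⁆ := by
  rw [← sub_eq_zero]
  refine hsep _ fun z ↦ ?_
  rw [map_sub, LinearMap.sub_apply, sub_eq_zero]
  calc Φ (f ⁅x, y⁆) z = Φ ⁅x, y⁆ (f z) := hadj _ _
    _ = Φ x ⁅f y, z⁆ := by rw [hΦ, hf]
    _ = Φ ⁅f x, y⁆ z := by rw [← hΦ, hf]

end CommutingMap

namespace LieAlgebra.IsKilling

variable {K L : Type*} [Field K] [LieRing L] [LieAlgebra K L] [FiniteDimensional K L]
  [IsKilling K L]

lemma trace_ad_eq_zero (x : L) : trace K L (ad K L x) = 0 := by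
  have hκ := killingForm_nondegenerate K L
  obtain ⟨u, hu⟩ : ∃ u : L, ∀ v, killingForm K L u v = trace K L (ad K L v) :=
    ⟨((killingForm K L).toDual hκ).symm (trace K L ∘ₗ (ad K L : L →ₗ[K] Module.End K L)),
      LinearMap.BilinForm.apply_toDual_symm_apply _⟩
  have hu_central : ad K L u = 0 := by
    ext a
    refine hκ.1 _ fun b ↦ ?_
    rw [ad_apply, traceForm_apply_lie_apply, hu]
    simp
  rw [← hu, killingForm_apply_apply, hu_central, zero_comp, map_zero]

lemma killingForm_isSelfAdjoint_of_commuting {f : L →ₗ[K] L}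
    (hf : ∀ x y : L, ⁅f x, y⁆ = ⁅x, f y⁆) : (killingForm K L).IsSelfAdjoint f := by
  intro x y
  have had : ad K L ⁅y, x⁆ = ad K L y * ad K L x - ad K L x * ad K L y := by ext; simp
  have htrace := trace_ad_eq_zero (K := K) (f ⁅y, x⁆)
  rw [ad_map_eq_ad_mul_of_commuting hf, had, sub_mul, map_sub, sub_eq_zero] at htrace
  calc killingForm K L (f x) y = trace K L (ad K L x * f * ad K L y) := by
        rw [killingForm_apply_apply, ad_map_eq_ad_mul_of_commuting hf]; rfl
    _ = trace K L (ad K L y * ad K L x * f) := by rw [trace_mul_comm, mul_assoc]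
    _ = trace K L (ad K L x * (ad K L y * f)) := by rw [htrace, mul_assoc]
    _ = killingForm K L x (f y) := by
        rw [killingForm_apply_apply, ad_map_eq_ad_mul_of_commuting hf]; rfl

end LieAlgebra.IsKilling

/-- On a finite-dimensional complex semisimple Lie algebra, every
commuting linear map lies in the centroid. -/
theorem stmt_6 {g : Type*} [LieRing g] [LieAlgebra ℂ g] [Module.Finite ℂ g]
    [LieAlgebra.IsSemisimple ℂ g]
    (f : g →ₗ[ℂ] g) (hf : ∀ x y : g, ⁅f x, y⁆ = ⁅x, f y⁆) :
    ∀ x y : g, f ⁅x, y⁆ = ⁅f x, y⁆ :=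
  map_lie_eq_lie_map_left_of_isSelfAdjoint (traceForm_apply_lie_apply ℂ g g)
    (IsKilling.killingForm_nondegenerate ℂ g).1
    (IsKilling.killingForm_isSelfAdjoint_of_commuting hf) hf
end

section
/- Let L be ℂ⁴ with standard basis e₁, e₂, e₃, e₄ and let [·,·] : L × L → L be the unique antisymmetric bilinear map with [e₁,e₂] = e₂, [e₂,e₃] = e₃, [e₄,e₂] = -e₄, and all other brackets of distinct basis vectors equal to zero (the 4-dimensional ω-Lie algebra L₁,₁). Then every local derivation of (L, [·,·]) is a derivation: if Δ : L → L is linear and for every x ∈ L there exists a derivation D of (L, [·,·]) with Δ(x) = D(x), then Δ itself is a derivation. -/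
/-- The bracket of the 4-dimensional ω-Lie algebra `L₁,₁` on `ℂ⁴`:
`[e₁,e₂] = e₂`, `[e₂,e₃] = e₃`, `[e₄,e₂] = -e₄`, all other brackets of
distinct basis vectors zero (extended antisymmetrically and bilinearly). -/
noncomputable def brL11 (x y : Fin 4 → ℂ) : Fin 4 → ℂ :=
  ![0,
    x 0 * y 1 - x 1 * y 0,
    x 1 * y 2 - x 2 * y 1,
    x 1 * y 3 - x 3 * y 1]

/-- A derivation of `(ℂ⁴, brL11)`. -/
def IsDerivL11 (D : (Fin 4 → ℂ) →ₗ[ℂ] (Fin 4 → ℂ)) : Prop :=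
  ∀ x y : Fin 4 → ℂ, D (brL11 x y) = brL11 (D x) y + brL11 x (D y)

def E0 : Fin 4 → ℂ := ![1,0,0,0]
def E1 : Fin 4 → ℂ := ![0,1,0,0]
def E2 : Fin 4 → ℂ := ![0,0,1,0]
def E3 : Fin 4 → ℂ := ![0,0,0,1]

lemma basis_decomp (z : Fin 4 → ℂ) : z = z 0 • E0 + z 1 • E1 + z 2 • E2 + z 3 • E3 := by
  funext i; fin_cases i <;> simp [E0, E1, E2, E3]

lemma br_E0E1 : brL11 E0 E1 = E1 := by funext i; fin_cases i <;> simp [brL11, E0, E1]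
lemma br_E1E2 : brL11 E1 E2 = E2 := by funext i; fin_cases i <;> simp [brL11, E1, E2]
lemma br_E1E3 : brL11 E1 E3 = E3 := by funext i; fin_cases i <;> simp [brL11, E1, E3]
lemma br_E0E2 : brL11 E0 E2 = 0 := by funext i; fin_cases i <;> simp [brL11, E0, E2]
lemma br_E0E3 : brL11 E0 E3 = 0 := by funext i; fin_cases i <;> simp [brL11, E0, E3]

section
variable (D : (Fin 4 → ℂ) →ₗ[ℂ] (Fin 4 → ℂ)) (hD : IsDerivL11 D)
include hD

lemma dE1_0 : D E1 0 = 0 := by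
  have h := congrFun (hD E0 E1) 0
  rw [br_E0E1] at h
  simpa [brL11] using h

lemma dE2_0 : D E2 0 = 0 := by
  have h := congrFun (hD E1 E2) 0
  rw [br_E1E2] at h
  simpa [brL11] using h

lemma dE3_0 : D E3 0 = 0 := by
  have h := congrFun (hD E1 E3) 0
  rw [br_E1E3] at h
  simpa [brL11] using h

lemma dE0_0 : D E0 0 = 0 := by
  have h := congrFun (hD E0 E1) 1
  rw [br_E0E1] at h
  simp [brL11, E0, E1] at h
  simpa [E0] using h

lemma dE1_1 : D E1 1 = 0 := by
  have h := congrFun (hD E1 E2) 2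
  rw [br_E1E2] at h
  simp [brL11, E1, E2] at h
  rw [show (![0,1,0,0] : Fin 4 → ℂ) = E1 from rfl] at h
  linear_combination h

lemma dE0_1 : D E0 1 = 0 := by
  have h := congrFun (hD E0 E2) 2
  rw [br_E0E2] at h
  simp [brL11, E0, E2] at h
  rw [show (![1,0,0,0] : Fin 4 → ℂ) = E0 from rfl] at h
  linear_combination -h

lemma dE2_1 : D E2 1 = 0 := by
  have h := congrFun (hD E0 E2) 1
  rw [br_E0E2] at h
  simp [brL11, E0, E2] at h
  rw [show (![0,0,1,0] : Fin 4 → ℂ) = E2 from rfl] at h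
  linear_combination -h

lemma dE3_1 : D E3 1 = 0 := by
  have h := congrFun (hD E0 E3) 1
  rw [br_E0E3] at h
  simp [brL11, E0, E3] at h
  rw [show (![0,0,0,1] : Fin 4 → ℂ) = E3 from rfl] at h
  linear_combination -h

lemma dE01_2 : D E0 2 + D E1 2 = 0 := by
  have h := congrFun (hD E0 E1) 2
  rw [br_E0E1] at h
  simp [brL11, E0, E1] at h
  rw [show (![1,0,0,0] : Fin 4 → ℂ) = E0 from rfl,
      show (![0,1,0,0] : Fin 4 → ℂ) = E1 from rfl] at h
  linear_combination h

lemma dE01_3 : D E0 3 + D E1 3 = 0 := by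
  have h := congrFun (hD E0 E1) 3
  rw [br_E0E1] at h
  simp [brL11, E0, E1] at h
  rw [show (![1,0,0,0] : Fin 4 → ℂ) = E0 from rfl,
      show (![0,1,0,0] : Fin 4 → ℂ) = E1 from rfl] at h
  linear_combination h

lemma deriv_comp0 (z : Fin 4 → ℂ) : D z 0 = 0 := by
  rw [basis_decomp z]
  simp [dE0_0 D hD, dE1_0 D hD, dE2_0 D hD, dE3_0 D hD]

lemma deriv_comp1 (z : Fin 4 → ℂ) : D z 1 = 0 := by
  rw [basis_decomp z]
  simp [dE0_1 D hD, dE1_1 D hD, dE2_1 D hD, dE3_1 D hD]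

lemma deriv_v : D (E0 + E1) = 0 := by
  funext i
  rw [map_add]
  fin_cases i
  · simpa using by rw [deriv_comp0 D hD E0, deriv_comp0 D hD E1]; ring
  · simpa using by rw [deriv_comp1 D hD E0, deriv_comp1 D hD E1]; ring
  · simpa using dE01_2 D hD
  · simpa using dE01_3 D hD

end


/-- Every local derivation of `L₁,₁` is a derivation. -/
theorem stmt_8 (Δ : (Fin 4 → ℂ) →ₗ[ℂ] (Fin 4 → ℂ))
    (hloc : ∀ x : Fin 4 → ℂ, ∃ D : (Fin 4 → ℂ) →ₗ[ℂ] (Fin 4 → ℂ),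
      IsDerivL11 D ∧ Δ x = D x) :
    IsDerivL11 Δ := by
  -- Δ vanishes in components 0 and 1
  have h0 : ∀ z, Δ z 0 = 0 := by
    intro z; obtain ⟨D, hD, hz⟩ := hloc z
    rw [hz]; exact deriv_comp0 D hD z
  have h1 : ∀ z, Δ z 1 = 0 := by
    intro z; obtain ⟨D, hD, hz⟩ := hloc z
    rw [hz]; exact deriv_comp1 D hD z
  -- Δ (E0 + E1) = 0
  have hv : Δ (E0 + E1) = 0 := by
    obtain ⟨D, hD, hz⟩ := hloc (E0 + E1)
    rw [hz]; exact deriv_v D hD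
  have hE1 : ∀ i, Δ E1 i = - Δ E0 i := by
    intro i
    have := congrFun hv i
    rw [map_add] at this
    simp only [Pi.add_apply, Pi.zero_apply] at this
    linear_combination this
  -- formula for components 2 and 3
  have hform2 : ∀ z : Fin 4 → ℂ,
      Δ z 2 = (z 0 - z 1) * Δ E0 2 + z 2 * Δ E2 2 + z 3 * Δ E3 2 := by
    intro z
    conv_lhs => rw [basis_decomp z]
    simp [hE1 2]
    ring
  have hform3 : ∀ z : Fin 4 → ℂ,
      Δ z 3 = (z 0 - z 1) * Δ E0 3 + z 2 * Δ E2 3 + z 3 * Δ E3 3 := by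
    intro z
    conv_lhs => rw [basis_decomp z]
    simp [hE1 3]
    ring
  intro x y
  funext i
  fin_cases i
  · simp [brL11, h0]
  · simp [brL11, h0, h1]
  · show Δ (brL11 x y) 2 = _
    rw [hform2]
    simp [brL11, h1]
    rw [hform2 x, hform2 y]
    ring
  · show Δ (brL11 x y) 3 = _
    rw [hform3]
    simp [brL11, h1]
    rw [hform3 x, hform3 y]
    ring
end

section
/- Let L be ℂ⁴ with standard basis e₁, e₂, e₃, e₄ and let [·,·] : L × L → L be the unique antisymmetric bilinear map with [e₁,e₂] = e₂, [e₂,e₃] = e₃, [e₄,e₂] = -e₄, and all other brackets of distinct basis vectors equal to zero (the 4-dimensional ω-Lie algebra L₁,₁). Then every local automorphism of (L, [·,·]) is an automorphism: if ψ : L → L is linear and for every x ∈ L there exists an automorphism φ of (L, [·,·]) with ψ(x) = φ(x), then ψ is an automorphism of (L, [·,·]). -/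
/-- An automorphism of `(ℂ⁴, brL11)`: a linear equivalence preserving the bracket. -/
def IsAutL11 (φ : (Fin 4 → ℂ) ≃ₗ[ℂ] (Fin 4 → ℂ)) : Prop :=
  ∀ x y : Fin 4 → ℂ, φ (brL11 x y) = brL11 (φ x) (φ y)

lemma brL11_apply_zero (x y : Fin 4 → ℂ) : brL11 x y 0 = 0 := rfl

lemma brL11_apply_one_of_apply_zero_eq_zero (x : Fin 4 → ℂ) {y : Fin 4 → ℂ} (hy : y 0 = 0) :
    brL11 x y 1 = x 0 * y 1 := by
  simp [brL11, hy]

lemma brL11_e₁_add_e₂_left {x : Fin 4 → ℂ} (hx : x 0 = 0) : brL11 ![1, 1, 0, 0] x = x := by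
  funext i
  fin_cases i <;> simp [brL11, hx]

lemma brL11_eq_smul_of_apply_zero_of_apply_one (x : Fin 4 → ℂ) {w : Fin 4 → ℂ}
    (h0 : w 0 = 0) (h1 : w 1 = 0) : brL11 x w = x 1 • w := by
  funext i
  fin_cases i <;> simp [brL11, h0, h1, mul_comm]

lemma LinearMap.map_brL11_of_map_e₁_add_e₂ (ℓ : (Fin 4 → ℂ) →ₗ[ℂ] ℂ)
    (hℓ : ℓ ![1, 1, 0, 0] = 0) (x y : Fin 4 → ℂ) :
    ℓ (brL11 x y) = x 1 * ℓ y - ℓ x * y 1 := by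
  obtain ⟨a, ha⟩ : ∃ a : Fin 4 → ℂ, ∀ z, ℓ z = ∑ i, z i * a i :=
    ⟨_, fun z => by simpa only [smul_eq_mul] using ℓ.pi_apply_eq_sum_univ z⟩
  simp only [ha, Fin.sum_univ_four] at hℓ ⊢
  simp only [brL11, Fin.isValue, Matrix.cons_val_zero, Matrix.cons_val_one, Matrix.cons_val,
    one_mul, zero_mul, add_zero, zero_add] at hℓ ⊢
  linear_combination (x 0 * y 1 - x 1 * y 0) * hℓ

lemma LinearMap.map_brL11_of_apply_zero_of_apply_one (f : (Fin 4 → ℂ) →ₗ[ℂ] (Fin 4 → ℂ))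
    (h0 : ∀ x, f x 0 = x 0) (h1 : ∀ x, f x 1 = x 1) (hu : f ![1, 1, 0, 0] = ![1, 1, 0, 0])
    (x y : Fin 4 → ℂ) : f (brL11 x y) = brL11 (f x) (f y) := by
  have hcoord (i : Fin 4) (hi : ![1, 1, 0, 0] i = (0 : ℂ)) (z w : Fin 4 → ℂ) :
      f (brL11 z w) i = z 1 * f w i - f z i * w 1 :=
    (LinearMap.proj i ∘ₗ f).map_brL11_of_map_e₁_add_e₂ (by simpa [hu] using hi) z w
  funext i
  fin_cases i
  · simp [h0, brL11]
  · simp [h1, brL11, h0]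
  · simp only [Fin.reduceFinMk, Fin.isValue]
    rw [hcoord 2 rfl]
    simp [brL11, h1]
  · simp only [Fin.reduceFinMk, Fin.isValue]
    rw [hcoord 3 rfl]
    simp [brL11, h1]

namespace IsAutL11

variable {φ : (Fin 4 → ℂ) ≃ₗ[ℂ] (Fin 4 → ℂ)}

lemma apply_zero_eq_zero (hφ : IsAutL11 φ) {x : Fin 4 → ℂ} (hx : x 0 = 0) : φ x 0 = 0 := by
  rw [← brL11_e₁_add_e₂_left hx, hφ, brL11_apply_zero]

lemma apply_one_eq_zero (hφ : IsAutL11 φ) {x : Fin 4 → ℂ} (h0 : x 0 = 0) (h1 : x 1 = 0) :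
    φ x 1 = 0 := by
  have : x = brL11 ![0, 1, 0, 0] x := by simp [brL11_eq_smul_of_apply_zero_of_apply_one _ h0 h1]
  rw [this, hφ, brL11_apply_one_of_apply_zero_eq_zero _ (hφ.apply_zero_eq_zero h0),
    hφ.apply_zero_eq_zero (by simp), zero_mul]

lemma apply_one (hφ : IsAutL11 φ) (x : Fin 4 → ℂ) : φ x 1 = x 1 := by
  set e₃ : Fin 4 → ℂ := ![0, 0, 1, 0]
  have he₃ : φ e₃ ≠ 0 := by simp [e₃]
  have h := congrArg φ (brL11_eq_smul_of_apply_zero_of_apply_one x (w := e₃) rfl rfl)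
  rw [hφ, brL11_eq_smul_of_apply_zero_of_apply_one _ (hφ.apply_zero_eq_zero rfl)
    (hφ.apply_one_eq_zero rfl rfl), map_smul] at h
  exact smul_left_injective ℂ he₃ h

lemma apply_zero (hφ : IsAutL11 φ) (x : Fin 4 → ℂ) : φ x 0 = x 0 := by
  set e₂ : Fin 4 → ℂ := ![0, 1, 0, 0]
  have h := congrArg (· 1) (hφ x e₂)
  rw [hφ.apply_one, brL11_apply_one_of_apply_zero_eq_zero _ rfl,
    brL11_apply_one_of_apply_zero_eq_zero _ (hφ.apply_zero_eq_zero rfl), hφ.apply_one] at h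
  simpa [e₂] using h.symm

lemma map_e₁_add_e₂ (hφ : IsAutL11 φ) : φ ![1, 1, 0, 0] = ![1, 1, 0, 0] := by
  have h := hφ ![1, 1, 0, 0] ![0, 1, 0, 0]
  rw [brL11_e₁_add_e₂_left rfl] at h
  have h2 := congrFun h 2
  have h3 := congrFun h 3
  simp only [brL11, Fin.isValue, hφ.apply_zero, hφ.apply_one, Matrix.cons_val_zero,
    Matrix.cons_val_one, Matrix.cons_val, mul_one, mul_zero, sub_zero, one_mul] at h2 h3
  funext i
  fin_cases i
  · simp [hφ.apply_zero]
  · simp [hφ.apply_one]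
  · simp only [Fin.reduceFinMk, Fin.isValue, Matrix.cons_val]
    linear_combination h2
  · simp only [Fin.reduceFinMk, Fin.isValue, Matrix.cons_val]
    linear_combination h3

end IsAutL11

/-- Every local automorphism of `L₁,₁` is an automorphism. -/
theorem stmt_11 (ψ : (Fin 4 → ℂ) →ₗ[ℂ] (Fin 4 → ℂ))
    (hloc : ∀ x : Fin 4 → ℂ, ∃ φ : (Fin 4 → ℂ) ≃ₗ[ℂ] (Fin 4 → ℂ),
      IsAutL11 φ ∧ ψ x = φ x) :
    Function.Bijective ψ ∧ ∀ x y : Fin 4 → ℂ, ψ (brL11 x y) = brL11 (ψ x) (ψ y) := by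
  have h0 (x : Fin 4 → ℂ) : ψ x 0 = x 0 := by
    obtain ⟨φ, hφ, hx⟩ := hloc x
    rw [hx, hφ.apply_zero]
  have h1 (x : Fin 4 → ℂ) : ψ x 1 = x 1 := by
    obtain ⟨φ, hφ, hx⟩ := hloc x
    rw [hx, hφ.apply_one]
  have hu : ψ ![1, 1, 0, 0] = ![1, 1, 0, 0] := by
    obtain ⟨φ, hφ, hx⟩ := hloc ![1, 1, 0, 0]
    rw [hx, hφ.map_e₁_add_e₂]
  have hinj : Function.Injective ψ := by
    refine (injective_iff_map_eq_zero ψ).mpr fun x hx => ?_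
    obtain ⟨φ, -, hφx⟩ := hloc x
    exact φ.map_eq_zero_iff.mp (hφx ▸ hx)
  exact ⟨⟨hinj, LinearMap.injective_iff_surjective.mp hinj⟩,
    ψ.map_brL11_of_apply_zero_of_apply_one h0 h1 hu⟩
end

section
/- Let B be ℂ³ with standard basis e₁, e₂, e₃ and the unique antisymmetric bilinear map [·,·] : B × B → B with [e₁,e₂] = e₂, [e₁,e₃] = e₂ + e₃, [e₂,e₃] = e₁ (the 3-dimensional simple ω-Lie algebra B). A linear map Δ : B → B is a ½-derivation of (B, [·,·]), i.e. Δ([x,y]) = (1/2)([Δ(x), y] + [x, Δ(y)]) for all x, y ∈ B, if and only if there exists λ ∈ ℂ such that Δ(x) = λ x for all x ∈ B. -/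
/-- The bracket of the 3-dimensional simple ω-Lie algebra `B` on `ℂ³`:
`[e₁,e₂] = e₂`, `[e₁,e₃] = e₂ + e₃`, `[e₂,e₃] = e₁`. -/
noncomputable def brB (x y : Fin 3 → ℂ) : Fin 3 → ℂ :=
  ![x 1 * y 2 - x 2 * y 1,
    (x 0 * y 1 - x 1 * y 0) + (x 0 * y 2 - x 2 * y 0),
    x 0 * y 2 - x 2 * y 0]

set_option maxHeartbeats 1000000 in
/-- A linear map on `B` is a ½-derivation iff it is a scalar
multiple of the identity. -/
theorem stmt_18 (Δ : (Fin 3 → ℂ) →ₗ[ℂ] (Fin 3 → ℂ)) :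
    (∀ x y : Fin 3 → ℂ,
        Δ (brB x y) = (1 / 2 : ℂ) • (brB (Δ x) y + brB x (Δ y))) ↔
    ∃ lam : ℂ, ∀ x : Fin 3 → ℂ, Δ x = lam • x := by
  constructor
  · intro h
    set f0 := Δ ![1,0,0] with hf0
    set f1 := Δ ![0,1,0] with hf1
    set f2 := Δ ![0,0,1] with hf2
    have hx : ∀ x : Fin 3 → ℂ, Δ x = x 0 • f0 + x 1 • f1 + x 2 • f2 := by
      intro x
      have hxe : x = x 0 • ![1,0,0] + x 1 • ![0,1,0] + x 2 • ![0,0,1] := by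
        funext i; fin_cases i <;> simp
      conv_lhs => rw [hxe]
      simp only [map_add, map_smul, hf0, hf1, hf2]
    have h01 := h ![1,0,0] ![0,1,0]
    simp only [hx] at h01
    have h02 := h ![1,0,0] ![0,0,1]
    have h12 := h ![0,1,0] ![0,0,1]
    simp only [hx] at h02 h12
    have a0 := congrFun h01 0; have a1 := congrFun h01 1; have a2 := congrFun h01 2
    have b0 := congrFun h02 0; have b1 := congrFun h02 1; have b2 := congrFun h02 2
    have c0 := congrFun h12 0; have c1 := congrFun h12 1; have c2 := congrFun h12 2
    simp [brB] at a0
    simp [brB] at a1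
    simp [brB] at a2
    simp [brB] at b0
    simp [brB] at b1
    simp [brB] at b2
    simp [brB] at c0
    simp [brB] at c1
    simp [brB] at c2
    have k12 : f1 2 = 0 := by linear_combination 2*a2
    have k10 : f1 0 = 0 := by linear_combination (4/5)*a0 - (2/5)*c2
    have k02 : f0 2 = 0 := by linear_combination (2/5)*a0 + (4/5)*c2
    have k01 : f0 1 = 0 := by linear_combination (4/5)*c1 - (2/5)*b0 + (4/5)*k10
    have k20 : f2 0 = 0 := by linear_combination b0 - k10 + (1/2)*k01
    have k11 : f1 1 = f0 0 := by linear_combination 2*a1 + k12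
    have k22 : f2 2 = f0 0 := by linear_combination 2*b2 - 2*k12
    have k21 : f2 1 = 0 := by linear_combination 2*b1 - 2*k11 + k22
    refine ⟨f0 0, fun x => ?_⟩
    rw [hx]
    funext i
    fin_cases i
    · simp
      linear_combination x 1*k10 + x 2*k20
    · simp
      linear_combination x 0*k01 + x 1*k11 + x 2*k21
    · simp
      linear_combination x 0*k02 + x 1*k12 + x 2*k22
  · rintro ⟨lam, hl⟩ x y
    simp only [hl]
    funext i
    fin_cases i <;> simp [brB, Pi.smul_apply, smul_eq_mul] <;> ring
end
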